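/- arXiv:2601.04338 — 8 statements merged into one kernel-verified Lean document; each statement's English description precedes it below -/
import Mathlib

section
/- In any AG-group G, if a*b = c*d then b*a = d*c. -/
class AGGroup (G : Type*) extends Mul G, Inv G where
  e : G
  left_id : ∀ a : G, e * a = a
  inv_mul : ∀ a : G, a⁻¹ * a = e
  mul_inv : ∀ a : G, a * a⁻¹ = e
  left_invertive : ∀ x y z : G, (x * y) * z = (z * y) * x

def AGPar {G : Type*} [AGGroup G] (a b c d : G) : Prop :=
  ∃ p q : G, p * a = q * b ∧ p * d = q * c

theorem stmt1 {G : Type*} [AGGroup G] (a b c d : G) (h : a * b = c * d) :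
    b * a = d * c := by
  have h1 : b * a = (a * b) * AGGroup.e := by
    rw [← AGGroup.left_id b, AGGroup.left_invertive, AGGroup.left_id]
  have h2 : d * c = (c * d) * AGGroup.e := by
    rw [← AGGroup.left_id d, AGGroup.left_invertive, AGGroup.left_id]
  rw [h1, h2, h]
end

section
/- In any AG-group G, a*(b*c) = b*(a*c) for all a,b,c in G. -/
lemma AGGroup.medial {G : Type*} [AGGroup G] (a b c d : G) :
    (a * b) * (c * d) = (a * c) * (b * d) := by
  calc (a * b) * (c * d) = ((c * d) * b) * a := AGGroup.left_invertive ..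
    _ = ((b * d) * c) * a := by rw [AGGroup.left_invertive c d b]
    _ = (a * c) * (b * d) := AGGroup.left_invertive ..

theorem stmt2 {G : Type*} [AGGroup G] (a b c : G) :
    a * (b * c) = b * (a * c) := by
  calc a * (b * c) = (AGGroup.e * a) * (b * c) := by rw [AGGroup.left_id]
    _ = (AGGroup.e * b) * (a * c) := AGGroup.medial ..
    _ = b * (a * c) := by rw [AGGroup.left_id]
end

section
/- In any AG-group G, (a*b)*(c*d) = (d*b)*(c*a) for all a,b,c,d in G. -/
lemma ag_medial {G : Type*} [AGGroup G] (x y z w : G) :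
    (x * y) * (z * w) = (x * z) * (y * w) := by
  rw [AGGroup.left_invertive x y (z*w), AGGroup.left_invertive z w y,
      AGGroup.left_invertive (y*w) z x]

lemma ag_comm3 {G : Type*} [AGGroup G] (x y z : G) :
    x * (y * z) = y * (x * z) := by
  calc x * (y * z) = (AGGroup.e * x) * (y * z) := by rw [AGGroup.left_id]
    _ = (AGGroup.e * y) * (x * z) := ag_medial _ _ _ _
    _ = y * (x * z) := by rw [AGGroup.left_id]

theorem stmt3 {G : Type*} [AGGroup G] (a b c d : G) :
    (a * b) * (c * d) = (d * b) * (c * a) := by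
  rw [ag_comm3 (a*b) c d, AGGroup.left_invertive a b d, ag_comm3 c (d*b) a]
end

section
/- In any AG-group G, (a*b)*(c*d) = (d*c)*(b*a) for all a,b,c,d in G. -/
namespace AGGroup
variable {G : Type*} [AGGroup G]

lemma medial_s4 (a b c d : G) : (a * b) * (c * d) = (a * c) * (b * d) := by
  rw [left_invertive, left_invertive c d b, left_invertive]

lemma flip (a b : G) : a * b = (b * a) * e := by
  rw [← left_id (G := G) a, left_invertive, left_id]

end AGGroup

theorem stmt4 {G : Type*} [AGGroup G] (a b c d : G) :
    (a * b) * (c * d) = (d * c) * (b * a) := by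
  rw [AGGroup.flip a b, AGGroup.flip c d, AGGroup.medial_s4, AGGroup.left_id,
    AGGroup.left_invertive, AGGroup.left_id]
end

section
/- In any AG-group G with left identity e, if a*b = e then b*a = e. -/
theorem stmt7 {G : Type*} [AGGroup G] (a b : G) (h : a * b = AGGroup.e) :
    b * a = AGGroup.e := by
  have : b * a = (AGGroup.e * b) * a := by rw [AGGroup.left_id]
  rw [this, AGGroup.left_invertive, h, AGGroup.left_id]
end

section
/- In any AG-group G, (a*b)⁻¹ = a⁻¹*b⁻¹ for all a,b in G. -/
theorem stmt8 {G : Type*} [AGGroup G] (a b : G) :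
    (a * b)⁻¹ = a⁻¹ * b⁻¹ := by
  have key : ∀ x c : G, (x * c) * c⁻¹ = x := fun x c => by
    rw [AGGroup.left_invertive, AGGroup.inv_mul, AGGroup.left_id]
  have h : (a⁻¹ * b⁻¹) * (a * b) = AGGroup.e := by
    rw [AGGroup.left_invertive, key, AGGroup.mul_inv]
  calc (a * b)⁻¹ = AGGroup.e * (a * b)⁻¹ := (AGGroup.left_id _).symm
    _ = ((a⁻¹ * b⁻¹) * (a * b)) * (a * b)⁻¹ := by rw [h]
    _ = a⁻¹ * b⁻¹ := key _ _
end

section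
/- Let G be an AG-group. If p,q in G witness Par(a,b,c,d), i.e. p*a = q*b and p*d = q*c, then a*b⁻¹ = p⁻¹*q. -/
lemma AG_swap {G : Type*} [AGGroup G] (x y : G) : x * y = (y * x) * AGGroup.e := by
  conv_lhs => rw [← AGGroup.left_id x, AGGroup.left_invertive]

theorem stmt15 {G : Type*} [AGGroup G] (a b c d p q : G)
    (h1 : p * a = q * b) (h2 : p * d = q * c) :
    a * b⁻¹ = p⁻¹ * q := by
  have k1 : (b⁻¹ * a) * p = q := by
    rw [← AGGroup.left_invertive, h1, AGGroup.left_invertive, AGGroup.inv_mul,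
      AGGroup.left_id]
  have k2 : b⁻¹ * a = q * p⁻¹ := by
    have : ((b⁻¹ * a) * p) * p⁻¹ = b⁻¹ * a := by
      rw [AGGroup.left_invertive, AGGroup.inv_mul, AGGroup.left_id]
    rw [← this, k1]
  rw [AG_swap a b⁻¹, k2, ← AG_swap]
end

section
/- Let G be an AG-group and a,b,p in G. Then Par(a,b,p*b,p*a) holds. -/
theorem stmt16 {G : Type*} [AGGroup G] (a b p : G) :
    AGPar a b (p * b) (p * a) := by
  refine ⟨b * a⁻¹, AGGroup.e, ?_, ?_⟩
  · rw [AGGroup.left_id, AGGroup.left_invertive, AGGroup.mul_inv, AGGroup.left_id]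
  · rw [AGGroup.left_id]
    calc (b * a⁻¹) * (p * a) = ((p * a) * a⁻¹) * b := AGGroup.left_invertive ..
      _ = ((a⁻¹ * a) * p) * b := by rw [AGGroup.left_invertive p a a⁻¹]
      _ = p * b := by rw [AGGroup.inv_mul, AGGroup.left_id]
end
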